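/- arXiv:2101.05846 — 3 statements merged into one kernel-verified Lean document; each statement's English description precedes it below -/
import Mathlib

section
/- Let f ≥ 1, let ψ_f(g)(x) = max { g(x + i) | i ∈ {0, …, f − 1} } be max pooling and s_f(g)(x) = g(f·x) be subsampling at stride f, and let E : (ℤ → ℝ) → (ℤ → ℝ) be an operator that is shift equivariant to arbitrary shifts, i.e. E(T_t(g)) = T_t(E(g)) for all g and t. Then the encoder block with pooling, EMP := s_f ∘ ψ_f ∘ E, is shift equivariant to input shifts f·t at output shifts t: for every g : ℤ → ℝ and every t ∈ ℤ, EMP(T_{f·t}(g)) = T_t(EMP(g)). -/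
/-- The shift operator: `T t g x = g (x - t)`. -/
noncomputable def T (t : ℤ) (g : ℤ → ℝ) : ℤ → ℝ := fun x => g (x - t)

/-- Max pooling with kernel size `f`:
`psi f hf g x = max { g (x + i) | i ∈ {0, …, f − 1} }`. -/
noncomputable def psi (f : ℕ) (hf : 1 ≤ f) (g : ℤ → ℝ) : ℤ → ℝ :=
  fun x => (Finset.range f).sup' (Finset.nonempty_range_iff.mpr (by omega))
    (fun i => g (x + (i : ℤ)))

/-- Subsampling at stride `f`: `sub f g x = g (f * x)`. -/
noncomputable def sub (f : ℤ) (g : ℤ → ℝ) : ℤ → ℝ := fun x => g (f * x)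

/-- An encoder block followed by max pooling with downsampling factor `f`,
`EMP := s_f ∘ ψ_f ∘ E`, is shift equivariant to input shifts `f * t`
at output shifts `t`. -/
theorem stmt_3 (f : ℕ) (hf : 1 ≤ f)
    (E : (ℤ → ℝ) → ℤ → ℝ) (hE : ∀ (g : ℤ → ℝ) (t : ℤ), E (T t g) = T t (E g))
    (g : ℤ → ℝ) (t : ℤ) :
    sub (f : ℤ) (psi f hf (E (T ((f : ℤ) * t) g)))
      = T t (sub (f : ℤ) (psi f hf (E g))) := by
  funext x
  simp only [sub, psi, T, hE]
  apply Finset.sup'_congr _ rfl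
  intro i _
  ring_nf
end

section
/- Let f ≥ 1, let ψ_f(g)(x) = max { g(x + i) | i ∈ {0, …, f − 1} } be max pooling and s_f(g)(x) = g(f·x) be subsampling at stride f, and let M := s_f ∘ ψ_f. Then for every l ≥ 0, the l-fold iterate M^[l] is shift equivariant to input shifts f^l·t at output shifts t: for every g : ℤ → ℝ and every t ∈ ℤ, M^[l](T_{f^l·t}(g)) = T_t(M^[l](g)). -/
/-- Max pooling followed by subsampling at stride `f`: `M := s_f ∘ ψ_f`. -/
noncomputable def M (f : ℕ) (hf : 1 ≤ f) : (ℤ → ℝ) → ℤ → ℝ :=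
  fun g => sub (f : ℤ) (psi f hf g)

lemma M_shift (f : ℕ) (hf : 1 ≤ f) (g : ℤ → ℝ) (t : ℤ) :
    M f hf (T ((f : ℤ) * t) g) = T t (M f hf g) := by
  funext x
  simp only [M, sub, psi, T]
  apply Finset.sup'_congr _ rfl
  intro i _
  ring_nf

/-- The `l`-fold iterate of `M = s_f ∘ ψ_f` is shift equivariant to
input shifts `f^l * t` at output shifts `t`. -/
theorem stmt_7 (f : ℕ) (hf : 1 ≤ f) (l : ℕ) (g : ℤ → ℝ) (t : ℤ) :
    (M f hf)^[l] (T ((f : ℤ) ^ l * t) g) = T t ((M f hf)^[l] g) := by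
  induction l generalizing g with
  | zero => simp
  | succ n ih =>
    rw [Function.iterate_succ_apply, Function.iterate_succ_apply,
      show (f:ℤ)^(n+1)*t = (f:ℤ)*((f:ℤ)^n*t) by ring, M_shift, ih]
end

section
/- Recursion step for U-Net levels: let f, s ∈ ℤ and let F, M, G : (ℤ → ℝ) → (ℤ → ℝ) be operators such that for all g : ℤ → ℝ and all t ∈ ℤ: F(T_{f·t}(g)) = T_t(F(g)) (encoder block with pooling factor f), M(T_{s·t}(g)) = T_{s·t}(M(g)) (inner path, shift equivariant to shifts s·t), and G(T_t(g)) = T_{f·t}(G(g)) (decoder block with upsampling factor f). Then for all g : ℤ → ℝ and all t ∈ ℤ, (G ∘ M ∘ F)(T_{f·s·t}(g)) = T_{f·s·t}((G ∘ M ∘ F)(g)). -/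
/-- Recursion step for U-Net levels: an encoder block with pooling factor `f`,
followed by an inner path that is shift equivariant to shifts `s * t`,
followed by a decoder block with upsampling factor `f`, is shift equivariant
to shifts `f * s * t`. -/
theorem stmt_17 (f s : ℤ) (F M G : (ℤ → ℝ) → ℤ → ℝ)
    (hF : ∀ (g : ℤ → ℝ) (t : ℤ), F (T (f * t) g) = T t (F g))
    (hM : ∀ (g : ℤ → ℝ) (t : ℤ), M (T (s * t) g) = T (s * t) (M g))
    (hG : ∀ (g : ℤ → ℝ) (t : ℤ), G (T t g) = T (f * t) (G g))
    (g : ℤ → ℝ) (t : ℤ) :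
    (G ∘ M ∘ F) (T (f * s * t) g) = T (f * s * t) ((G ∘ M ∘ F) g) := by
  have h1 : T (f * s * t) g = T (f * (s * t)) g := by rw [mul_assoc]
  simp only [Function.comp_apply, h1, hF, hM, hG, mul_assoc]
end
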